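/- For any words u, v, w over Y, the coefficient pairing satisfies ⟨Δ_⊛ w, u ⊗ v⟩ = ⟨w, u ⊛ v⟩, i.e. the quasi-shuffle coproduct Δ_⊛ (defined on letters by Δ_⊛ y_k = y_k ⊗ 1 + 1 ⊗ y_k + Σ_{i=1}^{k-1} y_i ⊗ y_{k-i} and extended as an algebra morphism for concatenation) is dual to the quasi-shuffle product. -/

import Mathlib

open scoped TensorProduct
open Finset

noncomputable section

/-- The alphabet `Y = {y_n : n ≥ 1}` and words over it. -/
abbrev Word : Type := FreeMonoid ℕ+

/-- `k⟨Y⟩`, the span of the words over `Y`, with the concatenation product. -/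
abbrev QSh (k : Type) [CommRing k] : Type := MonoidAlgebra k Word

/-- The letter `y_n` viewed in `k⟨Y⟩`, with the convention `y_0 = 1`. -/
def yy (k : Type) [CommRing k] (n : ℕ) : QSh k :=
  if h : 0 < n then MonoidAlgebra.of k Word (FreeMonoid.of (⟨n, h⟩ : ℕ+)) else 1

/-- The quasi-shuffle (stuffle) product of two words, with values in `k⟨Y⟩`:
`1 ⊛ v = v`, `u ⊛ 1 = u`, and
`(y_a u) ⊛ (y_b v) = y_a (u ⊛ y_b v) + y_b (y_a u ⊛ v) + y_{a+b} (u ⊛ v)`. -/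
def stuffleAux (k : Type) [CommRing k] : List ℕ+ → List ℕ+ → QSh k
  | [], v => MonoidAlgebra.of k Word (FreeMonoid.ofList v)
  | a :: u, [] => MonoidAlgebra.of k Word (FreeMonoid.ofList (a :: u))
  | a :: u, b :: v =>
      MonoidAlgebra.of k Word (FreeMonoid.of a) * stuffleAux k u (b :: v)
    + MonoidAlgebra.of k Word (FreeMonoid.of b) * stuffleAux k (a :: u) v
    + MonoidAlgebra.of k Word (FreeMonoid.of (a + b)) * stuffleAux k u v
  termination_by u v => u.length + v.length
  decreasing_by all_goals (simp; try omega)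

/-- The quasi-shuffle coproduct `Δ_⊛`, the algebra morphism (for concatenation) with
`Δ_⊛ y_n = y_n ⊗ 1 + 1 ⊗ y_n + Σ_{i+j=n, i,j ≥ 1} y_i ⊗ y_j`. -/
def Δstuf (k : Type) [CommRing k] [Algebra ℚ k] : QSh k →ₐ[k] (QSh k ⊗[k] QSh k) :=
  MonoidAlgebra.lift k (QSh k ⊗[k] QSh k) Word
    (FreeMonoid.lift fun n : ℕ+ =>
      (yy k n) ⊗ₜ 1 + 1 ⊗ₜ (yy k n)
      + ∑ p ∈ Finset.HasAntidiagonal.antidiagonal (n : ℕ),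
          if 0 < p.1 ∧ 0 < p.2 then (yy k p.1) ⊗ₜ[k] (yy k p.2) else 0)

/-- The pairing `⟨·, u ⊗ v⟩` on `k⟨Y⟩ ⊗ k⟨Y⟩`, words forming an orthonormal basis. -/
def pairT (k : Type) [CommRing k] [Algebra ℚ k] (u v : Word) :
    (QSh k ⊗[k] QSh k) →ₗ[k] k :=
  TensorProduct.lift ((LinearMap.mul k k).compl₁₂
    ((Finsupp.lapply u : (Word →₀ k) →ₗ[k] k) ∘ₗ (MonoidAlgebra.coeffLinearEquiv k).toLinearMap)
    ((Finsupp.lapply v : (Word →₀ k) →ₗ[k] k) ∘ₗ (MonoidAlgebra.coeffLinearEquiv k).toLinearMap))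

/-! Both sides obey the same recursion in the first letter of `w`. Since `Δ_⊛` is multiplicative,
pairing `Δ_⊛ (y_c w') = Δ_⊛ y_c · Δ_⊛ w'` against `u ⊗ v` strips `y_c` from the head of `u`, from
the head of `v`, or `y_i, y_j` with `i + j = c` from both heads; these are exactly the three terms
of the defining recursion of `⊛` read off at the coefficient of `y_c w'`. -/

open MonoidAlgebra FreeMonoid

section FreeMonoidAlgebra

variable {R α : Type*} [Semiring R] [DecidableEq α]

theorem coeff_of_ofList (g w : List α) :
    (of R _ (ofList g)).coeff (ofList w) = if g = w then 1 else 0 := by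
  classical
  simp [of_apply, Finsupp.single_apply]

theorem coeff_one_ofList (w : List α) :
    (1 : MonoidAlgebra R (FreeMonoid α)).coeff (ofList w) = if w = [] then 1 else 0 := by
  rw [← map_one (of R (FreeMonoid α)), ← ofList_nil, coeff_of_ofList]
  exact if_congr eq_comm rfl rfl

theorem coeff_of_mul_ofList (c : α) (p : MonoidAlgebra R (FreeMonoid α)) (w : List α) :
    (of R _ (FreeMonoid.of c) * p).coeff (ofList w) =
      if w.head? = some c then p.coeff (ofList w.tail) else 0 := by
  rw [of_apply]
  rcases w with _ | ⟨c', w⟩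
  · exact coeff_single_mul_of_forall_mul_ne _ _ fun d h => by
      simpa using congrArg FreeMonoid.toList h
  · by_cases h : c = c'
    · subst h
      simp [ofList_cons]
    · have hne : ∀ d, FreeMonoid.of c * d ≠ ofList (c' :: w) := fun d hd =>
        h (List.cons.inj (congrArg FreeMonoid.toList hd)).1
      rw [coeff_single_mul_of_forall_mul_ne _ _ hne]
      simp [Ne.symm h]

theorem coeff_of_mul_ofList_eq_mul (c : α) (p : MonoidAlgebra R (FreeMonoid α)) (w : List α) :
    (of R _ (FreeMonoid.of c) * p).coeff (ofList w) =
      (if w.head? = some c then 1 else 0) * p.coeff (ofList w.tail) := by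
  rw [coeff_of_mul_ofList, boole_mul]

end FreeMonoidAlgebra

section Stuffle

variable (k : Type) [CommRing k]

theorem yy_coe (c : ℕ+) : yy k c = of k Word (FreeMonoid.of c) := by
  rw [yy, dif_pos c.pos]
  rfl

theorem stuffleAux_nil_right (u : List ℕ+) : stuffleAux k u [] = of k Word (ofList u) := by
  cases u <;> rw [stuffleAux]

theorem coeff_stuffleAux_nil (u v : List ℕ+) :
    (stuffleAux k u v).coeff (ofList []) = if u = [] ∧ v = [] then 1 else 0 := by
  rcases u with _ | ⟨a, u⟩ <;> rcases v with _ | ⟨b, v⟩ <;>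
    simp only [stuffleAux, coeff_add, Finsupp.add_apply, coeff_of_mul_ofList, coeff_of_ofList] <;>
    simp

theorem coeff_stuffleAux_cons (u v : List ℕ+) (c : ℕ+) (w : List ℕ+) :
    (stuffleAux k u v).coeff (ofList (c :: w)) =
      (if u.head? = some c then (stuffleAux k u.tail v).coeff (ofList w) else 0)
      + (if v.head? = some c then (stuffleAux k u v.tail).coeff (ofList w) else 0)
      + (if Option.map₂ (· + ·) u.head? v.head? = some c then
          (stuffleAux k u.tail v.tail).coeff (ofList w) else 0) := by
  rcases u with _ | ⟨a, u⟩ <;> rcases v with _ | ⟨b, v⟩ <;>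
    simp only [stuffleAux, stuffleAux_nil_right, coeff_add, Finsupp.add_apply,
      coeff_of_mul_ofList, coeff_of_ofList] <;>
    simp [ite_and, eq_comm]

end Stuffle

section Pairing

variable (k : Type) [CommRing k] [Algebra ℚ k]

theorem pairT_tmul (u v : Word) (x y : QSh k) :
    pairT k u v (x ⊗ₜ y) = x.coeff u * y.coeff v :=
  rfl

theorem pairT_tmul_mul {x y : QSh k} {u v u' v' : Word} {r r' : k}
    (hx : ∀ p, (x * p).coeff u = r * p.coeff u') (hy : ∀ p, (y * p).coeff v = r' * p.coeff v')
    (s : QSh k ⊗[k] QSh k) :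
    pairT k u v (x ⊗ₜ y * s) = r * r' * pairT k u' v' s := by
  induction s using TensorProduct.induction_on with
  | zero => simp
  | tmul p q =>
    rw [Algebra.TensorProduct.tmul_mul_tmul, pairT_tmul, pairT_tmul, hx, hy]
    ring
  | add s t hs ht => rw [mul_add, map_add, map_add, hs, ht, mul_add]

theorem pairT_antidiagonal_mul (c : ℕ+) (u v : List ℕ+) (s : QSh k ⊗[k] QSh k) :
    pairT k (ofList u) (ofList v)
      ((∑ p ∈ antidiagonal (c : ℕ), if 0 < p.1 ∧ 0 < p.2 then yy k p.1 ⊗ₜ yy k p.2 else 0) * s) =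
      if Option.map₂ (· + ·) u.head? v.head? = some c then
        pairT k (ofList u.tail) (ofList v.tail) s else 0 := by
  have term : ∀ i j : ℕ+, pairT k (ofList u) (ofList v) (yy k i ⊗ₜ yy k j * s) =
      if u.head? = some i ∧ v.head? = some j then
        pairT k (ofList u.tail) (ofList v.tail) s else 0 := by
    intro i j
    rw [yy_coe, yy_coe, pairT_tmul_mul k (coeff_of_mul_ofList_eq_mul i · u)
      (coeff_of_mul_ofList_eq_mul j · v), ite_zero_mul_ite_zero, one_mul, boole_mul]
  have summand : ∀ p : ℕ × ℕ, pairT k (ofList u) (ofList v)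
      ((if 0 < p.1 ∧ 0 < p.2 then yy k p.1 ⊗ₜ yy k p.2 else 0) * s) =
      if Option.map₂ Prod.mk (u.head?.map (↑)) (v.head?.map (↑)) = some p then
        pairT k (ofList u.tail) (ofList v.tail) s else 0 := by
    rintro ⟨i, j⟩
    by_cases hpos : 0 < i ∧ 0 < j
    · lift i to ℕ+ using hpos.1
      lift j to ℕ+ using hpos.2
      rw [if_pos hpos, term]
      refine if_congr ?_ rfl rfl
      rcases u.head? with _ | a <;> rcases v.head? with _ | b <;> simp
    · rw [if_neg hpos, zero_mul, map_zero, if_neg]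
      rcases u.head? with _ | a <;> rcases v.head? with _ | b <;> simp
      rintro rfl rfl
      exact hpos ⟨a.pos, b.pos⟩
  simp_rw [sum_mul, map_sum, summand]
  rcases u.head? with _ | a <;> rcases v.head? with _ | b <;> simp [sum_ite_eq, ← PNat.coe_inj]

theorem pairT_Δstuf_of_mul (c : ℕ+) (u v : List ℕ+) (s : QSh k ⊗[k] QSh k) :
    pairT k (ofList u) (ofList v) (Δstuf k (of k Word (FreeMonoid.of c)) * s) =
      (if u.head? = some c then pairT k (ofList u.tail) (ofList v) s else 0)
      + (if v.head? = some c then pairT k (ofList u) (ofList v.tail) s else 0)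
      + (if Option.map₂ (· + ·) u.head? v.head? = some c then
          pairT k (ofList u.tail) (ofList v.tail) s else 0) := by
  have one_mul_coeff (w : Word) (p : QSh k) : (1 * p).coeff w = 1 * p.coeff w := by
    rw [one_mul, one_mul]
  rw [Δstuf, lift_of, FreeMonoid.lift_eval_of, yy_coe, add_mul, add_mul, map_add, map_add,
    pairT_tmul_mul k (coeff_of_mul_ofList_eq_mul c · u) (one_mul_coeff _),
    pairT_tmul_mul k (one_mul_coeff _) (coeff_of_mul_ofList_eq_mul c · v),
    pairT_antidiagonal_mul, mul_one, one_mul, boole_mul, boole_mul]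

theorem pairT_Δstuf_of_ofList (u v w : List ℕ+) :
    pairT k (ofList u) (ofList v) (Δstuf k (of k Word (ofList w))) =
      (stuffleAux k u v).coeff (ofList w) := by
  induction w generalizing u v with
  | nil =>
    rw [ofList_nil, map_one, map_one, Algebra.TensorProduct.one_def, pairT_tmul,
      coeff_one_ofList, coeff_one_ofList, ← ofList_nil, coeff_stuffleAux_nil,
      ite_zero_mul_ite_zero, one_mul]
  | cons c w ih =>
    rw [coeff_stuffleAux_cons, ofList_cons, map_mul, map_mul, pairT_Δstuf_of_mul, ih, ih, ih]

end Pairing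

/-- `⟨Δ_⊛ w, u ⊗ v⟩ = ⟨w, u ⊛ v⟩`, i.e. the quasi-shuffle coproduct is
dual to the quasi-shuffle product. -/
theorem deltastuf_dual_stuffle (k : Type) [CommRing k] [Algebra ℚ k] (u v w : Word) :
    pairT k u v (Δstuf k (MonoidAlgebra.of k Word w))
      = ((stuffleAux k (FreeMonoid.toList u) (FreeMonoid.toList v)).coeff : Word →₀ k) w :=
  pairT_Δstuf_of_ofList k u.toList v.toList w.toList

end
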